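/- Let n ≥ 1 and for each i : Fin n let α i be a nonempty finite type and let σ i 0 and σ i 1 be density matrices in Matrix (α i) (α i) ℂ. Then the trace distance between the even-parity mixture 2^{-(n-1)} · ∑_{r even parity} ⨂_i σ i (r i) and the odd-parity mixture 2^{-(n-1)} · ∑_{r odd parity} ⨂_i σ i (r i) equals the product ∏ i, TD(σ i 0, σ i 1). -/

import Mathlib

open Matrix BigOperators
open scoped ComplexOrder

/-- The `n`-fold tensor (Kronecker) product of matrices `M i : Matrix (α i) (α i) ℂ`,
indexed by `Π i, α i`, with entries `∏ i, M i (x i) (y i)`. -/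
def tensorPow {n : ℕ} {α : Fin n → Type*} [∀ i, Fintype (α i)]
    (M : ∀ i, Matrix (α i) (α i) ℂ) : Matrix (∀ i, α i) (∀ i, α i) ℂ :=
  Matrix.of fun x y => ∏ i, M i (x i) (y i)

/-- Parity of a bit string `r : Fin n → Fin 2`, computed in `ZMod 2`. -/
def parity {n : ℕ} (r : Fin n → Fin 2) : ZMod 2 := ∑ i, ((r i : ℕ) : ZMod 2)

/-- The square root of a positive semidefinite matrix, as `Matrix.PosSemidef.sqrt` was defined
in the older Mathlib (removed since). -/
noncomputable def posSemidefSqrt {n : Type*} [Fintype n] [DecidableEq n]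
    {A : Matrix n n ℂ} (hA : A.PosSemidef) : Matrix n n ℂ :=
  hA.1.eigenvectorUnitary.1 * diagonal ((↑) ∘ (√·) ∘ hA.1.eigenvalues) *
    (star hA.1.eigenvectorUnitary : Matrix n n ℂ)

/-- The trace norm of a square complex matrix: the trace of the positive semidefinite
square root of `Aᴴ * A`. -/
noncomputable def traceNorm {α : Type*} [Fintype α] [DecidableEq α]
    (A : Matrix α α ℂ) : ℝ :=
  ((posSemidefSqrt (Matrix.posSemidef_conjTranspose_mul_self A)).trace).re

/-- The trace distance of two matrices. -/
noncomputable def traceDist {α : Type*} [Fintype α] [DecidableEq α]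
    (ρ σ : Matrix α α ℂ) : ℝ :=
  (1 / 2) * traceNorm (ρ - σ)

/-- A density matrix: Hermitian positive semidefinite with trace 1. -/
def IsDensityMatrix {α : Type*} [Fintype α] (ρ : Matrix α α ℂ) : Prop :=
  ρ.PosSemidef ∧ ρ.trace = 1

/-!
Expanding every factor `σ i 0 - σ i 1 = ∑ j, (-1) ^ j • σ i j` multilinearly writes
`⨂ i, (σ i 0 - σ i 1)` as `∑ r, (-1) ^ parity r • ⨂ i, σ i (r i)`, which is the difference of the
unnormalised even and odd mixtures. The trace norm is multiplicative on tensor products: the tensor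
product of the square roots of the `(M i)ᴴ * M i` is a positive semidefinite square root of
`(⨂ M)ᴴ * ⨂ M`, and the trace of a tensor product is the product of the traces. The normalisations
combine as `1/2 * 2^{-(n-1)} = (1/2)^n`.
-/

open scoped MatrixOrder

section traceNorm

variable {β : Type*} [Fintype β] [DecidableEq β]

lemma posSemidefSqrt_eq_cfcSqrt {A : Matrix β β ℂ} (hA : A.PosSemidef) :
    posSemidefSqrt hA = CFC.sqrt A := by
  rw [CFC.sqrt_eq_cfc, cfc_nnreal_eq_real _ A, hA.1.cfc_eq]
  simp only [IsHermitian.cfc, posSemidefSqrt, Unitary.conjStarAlgAut_apply]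
  congr 3
  funext i
  simp [Real.coe_sqrt, Real.coe_toNNReal', max_eq_left (hA.eigenvalues_nonneg i)]

lemma traceNorm_eq_re_trace_of_mul_self {A S : Matrix β β ℂ} (hS : S.PosSemidef)
    (h : S * S = Aᴴ * A) : traceNorm A = S.trace.re := by
  rw [traceNorm, posSemidefSqrt_eq_cfcSqrt, CFC.sqrt_unique h hS.nonneg]

lemma traceNorm_smul_of_nonneg {c : ℝ} (hc : 0 ≤ c) (A : Matrix β β ℂ) :
    traceNorm (c • A) = c * traceNorm A := by
  set S := CFC.sqrt (Aᴴ * A)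
  have hS : S.PosSemidef := (CFC.sqrt_nonneg _).posSemidef
  have hcS : (c • S).PosSemidef := by
    simpa only [Complex.coe_smul] using hS.smul (Complex.zero_le_real.mpr hc)
  have hSS : S * S = Aᴴ * A := CFC.sqrt_mul_sqrt_self _ (posSemidef_conjTranspose_mul_self A).nonneg
  rw [traceNorm_eq_re_trace_of_mul_self hS hSS,
    traceNorm_eq_re_trace_of_mul_self hcS (by simp [conjTranspose_smul, smul_smul, hSS]),
    trace_smul, Complex.real_smul, Complex.re_ofReal_mul]

end traceNorm

section tensorPow

variable {n : ℕ} {α : Fin n → Type*} [∀ i, Fintype (α i)]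

lemma tensorPow_mul (M N : ∀ i, Matrix (α i) (α i) ℂ) :
    tensorPow M * tensorPow N = tensorPow (fun i => M i * N i) := by
  ext x y
  simp only [tensorPow, mul_apply, of_apply]
  rw [Fintype.prod_sum (fun i j => M i (x i) j * N i j (y i))]
  simp [Finset.prod_mul_distrib]

lemma conjTranspose_tensorPow (M : ∀ i, Matrix (α i) (α i) ℂ) :
    (tensorPow M)ᴴ = tensorPow (fun i => (M i)ᴴ) := by
  ext x y
  simp [tensorPow, conjTranspose_apply, star_prod]

lemma trace_tensorPow (M : ∀ i, Matrix (α i) (α i) ℂ) :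
    (tensorPow M).trace = ∏ i, (M i).trace := by
  simp only [trace, diag, tensorPow, of_apply]
  rw [Fintype.prod_sum (fun i j => M i j j)]

lemma Matrix.PosSemidef.tensorPow {M : ∀ i, Matrix (α i) (α i) ℂ} (hM : ∀ i, (M i).PosSemidef) :
    (tensorPow M).PosSemidef := by
  classical
  choose B hB using fun i => CStarAlgebra.nonneg_iff_eq_star_mul_self.mp (hM i).nonneg
  simp only [funext hB, star_eq_conjTranspose, ← tensorPow_mul, ← conjTranspose_tensorPow]
  exact posSemidef_conjTranspose_mul_self _

lemma tensorPow_sum_smul {κ : Type*} [Fintype κ] (c : Fin n → κ → ℂ)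
    (M : ∀ i, κ → Matrix (α i) (α i) ℂ) :
    tensorPow (fun i => ∑ j, c i j • M i j)
      = ∑ r : Fin n → κ, (∏ i, c i (r i)) • tensorPow (fun i => M i (r i)) := by
  ext x y
  simp only [tensorPow, of_apply, Matrix.sum_apply, Matrix.smul_apply, smul_eq_mul]
  rw [Fintype.prod_sum (fun i j => c i j * M i j (x i) (y i))]
  simp [Finset.prod_mul_distrib]

lemma traceNorm_tensorPow [∀ i, DecidableEq (α i)] (M : ∀ i, Matrix (α i) (α i) ℂ) :
    traceNorm (tensorPow M) = ∏ i, traceNorm (M i) := by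
  set S : ∀ i, Matrix (α i) (α i) ℂ := fun i => CFC.sqrt ((M i)ᴴ * M i)
  have hS : ∀ i, (S i).PosSemidef := fun i => (CFC.sqrt_nonneg _).posSemidef
  have hSS : ∀ i, S i * S i = (M i)ᴴ * M i := fun i =>
    CFC.sqrt_mul_sqrt_self _ (posSemidef_conjTranspose_mul_self (M i)).nonneg
  have hre : ∀ i, ((S i).trace.re : ℂ) = (S i).trace := fun i =>
    (Complex.eq_re_of_ofReal_le (by exact_mod_cast (hS i).trace_nonneg)).symm
  rw [traceNorm_eq_re_trace_of_mul_self (PosSemidef.tensorPow hS)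
      (by rw [tensorPow_mul, conjTranspose_tensorPow, tensorPow_mul, funext hSS]),
    trace_tensorPow, ← Finset.prod_congr rfl fun i _ => hre i, ← Complex.ofReal_prod,
    Complex.ofReal_re]
  exact Finset.prod_congr rfl fun i _ => (traceNorm_eq_re_trace_of_mul_self (hS i) (hSS i)).symm

end tensorPow

section parity

variable {n : ℕ}

lemma prod_neg_one_pow_eq_neg_one_pow_parity (r : Fin n → Fin 2) :
    ∏ i, (-1 : ℂ) ^ (r i : ℕ) = (-1) ^ (parity r).val := by
  rw [Finset.prod_pow_eq_pow_sum, parity, ← Nat.cast_sum, ZMod.val_natCast,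
    ← neg_one_pow_eq_pow_mod_two]

lemma sum_neg_one_pow_parity_smul {E : Type*} [AddCommGroup E] [Module ℂ E]
    (f : (Fin n → Fin 2) → E) :
    ∑ r, (-1 : ℂ) ^ (parity r).val • f r
      = ∑ r ∈ Finset.univ.filter (fun r => parity r = 0), f r
        - ∑ r ∈ Finset.univ.filter (fun r => parity r = 1), f r := by
  rw [← Finset.sum_fiberwise Finset.univ parity]
  have hfiber : ∀ p : ZMod 2, ∑ r ∈ Finset.univ.filter (fun r => parity r = p),
      (-1 : ℂ) ^ (parity r).val • f r
        = (-1 : ℂ) ^ p.val • ∑ r ∈ Finset.univ.filter (fun r => parity r = p), f r := by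
    intro p
    rw [Finset.smul_sum]
    exact Finset.sum_congr rfl fun r hr => by rw [(Finset.mem_filter.mp hr).2]
  rw [Finset.sum_congr rfl fun p _ => hfiber p,
    show (Finset.univ : Finset (ZMod 2)) = {0, 1} from rfl, Finset.sum_pair zero_ne_one]
  simp [sub_eq_add_neg, ZMod.val_one]

end parity

lemma tensorPow_sub_eq_sum_even_sub_sum_odd {n : ℕ} {α : Fin n → Type*} [∀ i, Fintype (α i)]
    (σ : ∀ i, Fin 2 → Matrix (α i) (α i) ℂ) :
    tensorPow (fun i => σ i 0 - σ i 1)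
      = ∑ r ∈ Finset.univ.filter (fun r : Fin n → Fin 2 => parity r = 0),
          tensorPow (fun i => σ i (r i))
        - ∑ r ∈ Finset.univ.filter (fun r : Fin n → Fin 2 => parity r = 1),
          tensorPow (fun i => σ i (r i)) := by
  have hdiff : ∀ i, σ i 0 - σ i 1 = ∑ j : Fin 2, (-1 : ℂ) ^ (j : ℕ) • σ i j := fun i => by
    simp [Fin.sum_univ_two, sub_eq_add_neg]
  simp only [hdiff, tensorPow_sum_smul, prod_neg_one_pow_eq_neg_one_pow_parity]
  exact sum_neg_one_pow_parity_smul _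

theorem stmt3_general {n : ℕ} (hn : 1 ≤ n) (α : Fin n → Type*) [∀ i, Fintype (α i)]
    [∀ i, DecidableEq (α i)]
    (σ : ∀ i, Fin 2 → Matrix (α i) (α i) ℂ) :
    traceDist
      (((2 : ℝ) ^ (n - 1))⁻¹ •
        ∑ r ∈ Finset.univ.filter (fun r : Fin n → Fin 2 => parity r = 0),
          tensorPow (fun i => σ i (r i)))
      (((2 : ℝ) ^ (n - 1))⁻¹ •
        ∑ r ∈ Finset.univ.filter (fun r : Fin n → Fin 2 => parity r = 1),
          tensorPow (fun i => σ i (r i)))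
      = ∏ i, traceDist (σ i 0) (σ i 1) := by
  obtain ⟨m, rfl⟩ : ∃ m, n = m + 1 := ⟨n - 1, by omega⟩
  simp only [traceDist, ← smul_sub, ← tensorPow_sub_eq_sum_even_sub_sum_odd,
    traceNorm_smul_of_nonneg (by positivity : (0 : ℝ) ≤ (2 ^ (m + 1 - 1))⁻¹), traceNorm_tensorPow,
    Finset.prod_mul_distrib, Finset.prod_const, Finset.card_univ, Fintype.card_fin]
  rw [Nat.add_sub_cancel, one_div, inv_pow, pow_succ]
  field_simp

theorem stmt3 {n : ℕ} (hn : 1 ≤ n) (α : Fin n → Type*) [∀ i, Fintype (α i)]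
    [∀ i, DecidableEq (α i)] [∀ i, Nonempty (α i)]
    (σ : ∀ i, Fin 2 → Matrix (α i) (α i) ℂ)
    (hσ : ∀ i b, IsDensityMatrix (σ i b)) :
    traceDist
      (((2 : ℝ) ^ (n - 1))⁻¹ •
        ∑ r ∈ Finset.univ.filter (fun r : Fin n → Fin 2 => parity r = 0),
          tensorPow (fun i => σ i (r i)))
      (((2 : ℝ) ^ (n - 1))⁻¹ •
        ∑ r ∈ Finset.univ.filter (fun r : Fin n → Fin 2 => parity r = 1),
          tensorPow (fun i => σ i (r i)))
      = ∏ i, traceDist (σ i 0) (σ i 1) :=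
  stmt3_general hn α σ
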